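/- arXiv:1811.04979 — 3 statements merged into one kernel-verified Lean document; each statement's English description precedes it below -/
import Mathlib

section
/- The rational map φ(w) = w + 1/(2w²) is univalent (injective) on the exterior of the closed unit disk {w ∈ ℂ : |w| > 1}. -/
/-- The rational map `φ(w) = w + 1/(2w²)` is univalent on `{|w| > 1}`. -/
theorem deltoid_phi_univalent (w₁ w₂ : ℂ) (h₁ : 1 < ‖w₁‖) (h₂ : 1 < ‖w₂‖)
    (h : w₁ + 1 / (2 * w₁ ^ 2) = w₂ + 1 / (2 * w₂ ^ 2)) : w₁ = w₂ := by
  have hw₁ : w₁ ≠ 0 := by intro e; simp [e] at h₁; linarith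
  have hw₂ : w₂ ≠ 0 := by intro e; simp [e] at h₂; linarith
  by_contra hne
  have hsub : w₁ - w₂ ≠ 0 := sub_ne_zero.mpr hne
  have key : 2 * w₁ ^ 2 * w₂ ^ 2 = w₁ + w₂ := by
    have hp : (w₁ - w₂) * (2 * w₁ ^ 2 * w₂ ^ 2) = (w₁ - w₂) * (w₁ + w₂) := by
      field_simp at h
      linear_combination h
    exact mul_left_cancel₀ hsub hp
  have hn : ‖2 * w₁ ^ 2 * w₂ ^ 2‖ = 2 * ‖w₁‖ ^ 2 * ‖w₂‖ ^ 2 := by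
    simp [norm_mul, norm_pow]
  have hle : ‖w₁ + w₂‖ ≤ ‖w₁‖ + ‖w₂‖ := norm_add_le _ _
  have := congrArg norm key
  rw [hn] at this
  nlinarith [hle, h₁, h₂, this, mul_pos (mul_pos two_pos (mul_pos (norm_pos_iff.mpr hw₁) (norm_pos_iff.mpr hw₂))) (mul_pos (norm_pos_iff.mpr hw₁) (norm_pos_iff.mpr hw₂)), sq_nonneg (‖w₁‖ - ‖w₂‖), sq_nonneg (‖w₁‖*‖w₂‖ - 1), mul_pos (norm_pos_iff.mpr hw₁) (norm_pos_iff.mpr hw₂)]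
end

section
/- For a ∈ [−1/12, 1/4], the interval [−∞, 1/4] is invariant under the Schwarz reflection map F_a: specifically F_a maps [−∞, −3/4] decreasingly onto [−3/4, a], maps [−3/4, 0] decreasingly onto [−∞, −3/4], and maps [0, 1/4] increasingly onto [−∞, 1/4]. Consequently the critical point 0 never escapes to the fundamental tile, so [−1/12, 1/4] is contained in the connectedness locus C(S). -/
/-- The Schwarz reflection of the cardioid restricted to the real interval
`(-3/4, 1/4]`, in closed form. -/
noncomputable def cardReflReal (x : ℝ) : ℝ :=
  (1 - 2 * Real.sqrt (1 - 4 * x)) / (4 * (1 - Real.sqrt (1 - 4 * x)) ^ 2)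

/-- The real restriction of the Schwarz reflection map `F_a` of the
circle-and-cardioid family: circle inversion in `|w − a| = a + 3/4` for
`x < −3/4`, cardioid reflection for `x ≥ −3/4`. -/
noncomputable def FaReal (a x : ℝ) : ℝ :=
  if x < -(3 / 4) then a + (a + 3 / 4) ^ 2 / (x - a) else cardReflReal x

private lemma card_at : cardReflReal (-(3/4)) = -(3/4) := by
  unfold cardReflReal
  rw [show (1 - 4 * (-(3/4)) : ℝ) = 2^2 by norm_num,
    Real.sqrt_sq (by norm_num : (0:ℝ) ≤ 2)]
  norm_num

private lemma card_anti : StrictAntiOn cardReflReal (Set.Ico (-(3/4):ℝ) 0) := by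
  rintro x ⟨hx1, hx2⟩ y ⟨hy1, hy2⟩ hxy
  unfold cardReflReal
  set s := Real.sqrt (1 - 4*x) with hs
  set t := Real.sqrt (1 - 4*y) with ht
  have hs2 : s^2 = 1 - 4*x := Real.sq_sqrt (by linarith)
  have ht2 : t^2 = 1 - 4*y := Real.sq_sqrt (by linarith)
  have hts : t < s := Real.sqrt_lt_sqrt (by linarith) (by linarith)
  have ht1 : 1 < t := by nlinarith [Real.sqrt_nonneg (1 - 4*y)]
  have hs1 : 1 < s := lt_trans ht1 hts
  rw [div_lt_div_iff₀ (by nlinarith) (by nlinarith)]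
  nlinarith [mul_pos (sub_pos.2 hts) (show (0:ℝ) < 2*s*t - s - t by nlinarith)]

private lemma card_mono : StrictMonoOn cardReflReal (Set.Ioc (0:ℝ) (1/4)) := by
  rintro x ⟨hx1, hx2⟩ y ⟨hy1, hy2⟩ hxy
  unfold cardReflReal
  set s := Real.sqrt (1 - 4*x) with hs
  set t := Real.sqrt (1 - 4*y) with ht
  have hs2 : s^2 = 1 - 4*x := Real.sq_sqrt (by linarith)
  have ht2 : t^2 = 1 - 4*y := Real.sq_sqrt (by linarith)
  have hts : t < s := Real.sqrt_lt_sqrt (by linarith) (by linarith)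
  have ht0 : 0 ≤ t := Real.sqrt_nonneg _
  have hs1 : s < 1 := by nlinarith [Real.sqrt_nonneg (1 - 4*x)]
  rw [div_lt_div_iff₀ (by nlinarith) (by nlinarith)]
  nlinarith [mul_pos (sub_pos.2 hts) (show (0:ℝ) < s + t - 2*s*t by nlinarith)]

private lemma card_mem2 {x : ℝ} (hx1 : -(3/4) ≤ x) (hx2 : x < 0) :
    cardReflReal x ≤ -(3/4) := by
  unfold cardReflReal
  set s := Real.sqrt (1 - 4*x) with hs
  have hs2 : s^2 = 1 - 4*x := Real.sq_sqrt (by linarith)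
  have hs1 : 1 < s := by nlinarith [Real.sqrt_nonneg (1 - 4*x)]
  have hs4 : s ≤ 2 := by nlinarith [Real.sqrt_nonneg (1 - 4*x)]
  rw [div_le_iff₀ (by nlinarith)]
  nlinarith [sq_nonneg (s - 2), sq_nonneg (3*s - 2)]

private lemma card_mem3 {x : ℝ} (hx1 : 0 < x) (hx2 : x ≤ 1/4) :
    cardReflReal x ≤ 1/4 := by
  unfold cardReflReal
  set s := Real.sqrt (1 - 4*x) with hs
  have hs2 : s^2 = 1 - 4*x := Real.sq_sqrt (by linarith)
  have hs0 : 0 ≤ s := Real.sqrt_nonneg _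
  have hs1 : s < 1 := by nlinarith
  rw [div_le_iff₀ (by nlinarith)]
  nlinarith [sq_nonneg s]

private lemma card_surj2 {w : ℝ} (hw : w ≤ -(3/4)) :
    ∃ x, (-(3/4) ≤ x ∧ x < 0) ∧ cardReflReal x = w := by
  have hw0 : w < 0 := by linarith
  set r := Real.sqrt (1 - 4*w) with hr
  have hr2 : r^2 = 1 - 4*w := Real.sq_sqrt (by linarith)
  have hr0 : 0 ≤ r := Real.sqrt_nonneg _
  have hrge : 2 ≤ r := by nlinarith
  set t := (1 + r)/(-(4*w)) with ht
  have ht0 : 0 < t := div_pos (by linarith) (by linarith)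
  have ht1 : t ≤ 1 := by
    rw [ht, div_le_one (by linarith)]
    nlinarith
  have hA : -(4*w)*t = 1 + r := by
    rw [ht]; field_simp
    exact div_self hw0.ne
  have hquad : 4*w*t^2 + 2*t + 1 = 0 := by
    have h4w : (4*w) ≠ 0 := by linarith
    have hz : 4*w*(4*w*t^2 + 2*t + 1) = 0 := by
      linear_combination ((-(4*w)*t) + (-1) + r) * hA + hr2
    exact (mul_eq_zero.mp hz).resolve_left h4w
  refine ⟨-(2*t + t^2)/4, ⟨by nlinarith, by nlinarith⟩, ?_⟩
  have hsq : Real.sqrt (1 - 4*(-(2*t + t^2)/4)) = 1 + t := by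
    rw [show (1 - 4*(-(2*t + t^2)/4) : ℝ) = (1+t)^2 by ring]
    exact Real.sqrt_sq (by linarith)
  unfold cardReflReal
  rw [show (1 - 4 * (-(2*t + t^2)/4) : ℝ) = 1 - 4*(-(2*t + t^2)/4) by ring, hsq]
  rw [show (4*(1 - (1+t))^2 : ℝ) = 4*t^2 by ring]
  rw [div_eq_iff (by positivity)]
  linear_combination -hquad

private lemma card_surj3 {w : ℝ} (hw : w ≤ 1/4) :
    ∃ x, (0 < x ∧ x ≤ 1/4) ∧ cardReflReal x = w := by
  set r := Real.sqrt (1 - 4*w) with hr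
  have hr2 : r^2 = 1 - 4*w := Real.sq_sqrt (by linarith)
  have hr0 : 0 ≤ r := Real.sqrt_nonneg _
  set u := 1/(1+r) with hu
  have hu0 : 0 < u := by positivity
  have hu1 : u ≤ 1 := by
    rw [hu, div_le_one (by linarith)]; linarith
  have hquad : 4*w*u^2 - 2*u + 1 = 0 := by
    rw [hu]
    have h1r : (1:ℝ) + r ≠ 0 := by linarith
    field_simp
    linear_combination hr2
  refine ⟨(2*u - u^2)/4, ⟨by nlinarith, by nlinarith [sq_nonneg (u-1)]⟩, ?_⟩
  have hsq : Real.sqrt (1 - 4*((2*u - u^2)/4)) = 1 - u := by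
    rw [show (1 - 4*((2*u - u^2)/4) : ℝ) = (1-u)^2 by ring]
    exact Real.sqrt_sq (by linarith)
  unfold cardReflReal
  rw [show (1 - 4 * ((2*u - u^2)/4) : ℝ) = 1 - 4*((2*u - u^2)/4) by ring, hsq]
  rw [show (4*(1 - (1-u))^2 : ℝ) = 4*u^2 by ring]
  rw [div_eq_iff (by positivity)]
  linear_combination -hquad

/-- For `a ∈ [−1/12, 1/4]` the interval `[−∞, 1/4]` is invariant under `F_a`:
`F_a` maps `(−∞, −3/4]` decreasingly onto `[−3/4, a)` (with `−∞ ↦ a`), maps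
`[−3/4, 0)` decreasingly onto `(−∞, −3/4]`, and maps `(0, 1/4]` increasingly
onto `(−∞, 1/4]` (with `0 ↦ −∞`); consequently the critical point `0` never
escapes to the fundamental tile. -/
theorem real_interval_invariant (a : ℝ) (h1 : -(1 / 12) ≤ a) (h2 : a ≤ 1 / 4) :
    StrictAntiOn (FaReal a) (Set.Iic (-(3 / 4))) ∧
      FaReal a '' Set.Iic (-(3 / 4)) = Set.Ico (-(3 / 4)) a ∧
      StrictAntiOn (FaReal a) (Set.Ico (-(3 / 4)) 0) ∧
      FaReal a '' Set.Ico (-(3 / 4)) 0 = Set.Iic (-(3 / 4)) ∧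
      StrictMonoOn (FaReal a) (Set.Ioc 0 (1 / 4)) ∧
      FaReal a '' Set.Ioc 0 (1 / 4) = Set.Iic (1 / 4) ∧
      ∀ x : ℝ, x ≤ 1 / 4 → x ≠ 0 → FaReal a x ≤ 1 / 4 := by
  have hc : (0:ℝ) < a + 3/4 := by linarith
  set c : ℝ := a + 3/4 with hcdef
  -- value of FaReal on the circle part
  have hFlt : ∀ x : ℝ, x < -(3/4) → FaReal a x = a + c^2/(x - a) := by
    intro x hx
    unfold FaReal
    rw [if_pos (by norm_num; linarith [hx])]
  have hFeq : ∀ x : ℝ, -(3/4) ≤ x → FaReal a x = cardReflReal x := by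
    intro x hx
    unfold FaReal
    rw [if_neg (by norm_num; linarith [hx])]
  have hF34 : FaReal a (-(3/4)) = -(3/4) := by
    rw [hFeq _ le_rfl, card_at]
  -- bounds on the circle part
  have hcirc_lt : ∀ x : ℝ, x < -(3/4) → FaReal a x < a := by
    intro x hx
    rw [hFlt x hx]
    have : c^2/(x - a) < 0 := div_neg_of_pos_of_neg (by positivity) (by linarith)
    linarith
  have hcirc_gt : ∀ x : ℝ, x < -(3/4) → -(3/4) < FaReal a x := by
    intro x hx
    rw [hFlt x hx]
    have hxa : x - a < 0 := by linarith
    have key : c^2/(x - a) + c = c*(x + 3/4)/(x - a) := by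
      rw [hcdef]
      field_simp [hxa.ne]
      ring
    have hpos : 0 < c*(x + 3/4)/(x - a) :=
      div_pos_of_neg_of_neg (by nlinarith) (by linarith)
    nlinarith [key, hpos]
  -- strict anti on circle part
  have hanti1 : StrictAntiOn (FaReal a) (Set.Iic (-(3/4))) := by
    rintro x hx y hy hxy
    have hx : x ≤ -(3/4) := hx
    have hy : y ≤ -(3/4) := hy
    rcases eq_or_lt_of_le hy with hy' | hy'
    · rw [hy', hF34]
      exact hcirc_gt x (by rw [← hy']; exact hxy)
    · rw [hFlt x (lt_of_lt_of_le hxy hy), hFlt y hy']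
      have hxa : x - a < 0 := by linarith [lt_of_lt_of_le hxy hy]
      have hya : y - a < 0 := by linarith
      have key : c^2/(y - a) - c^2/(x - a) = c^2*(x - y)/((y - a)*(x - a)) := by
        rw [hcdef]
        field_simp [hxa.ne, hya.ne]
        ring
      have : c^2*(x - y)/((y - a)*(x - a)) < 0 :=
        div_neg_of_neg_of_pos (mul_neg_of_pos_of_neg (pow_pos hc 2) (by linarith))
          (by nlinarith)
      linarith [key, this]
  -- image of circle part
  have himg1 : FaReal a '' Set.Iic (-(3/4)) = Set.Ico (-(3/4)) a := by
    ext w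
    constructor
    · rintro ⟨x, hx, rfl⟩
      simp only [Set.mem_Iic] at hx
      have hx : x ≤ -(3/4) := hx
      rcases eq_or_lt_of_le hx with hx' | hx'
      · subst hx'
        rw [hF34]
        exact ⟨le_rfl, by linarith⟩
      · exact ⟨le_of_lt (hcirc_gt x hx'), hcirc_lt x hx'⟩
    · rintro ⟨hw1, hw2⟩
      rcases eq_or_lt_of_le hw1 with hw' | hw'
      · exact ⟨-(3/4), Set.mem_Iic.2 le_rfl, by rw [hF34]; exact hw'⟩
      · refine ⟨a + c^2/(w - a), ?_, ?_⟩
        · have hwa : w - a < 0 := by linarith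
          have key : a + c^2/(w - a) + 3/4 = c*(w + 3/4)/(w - a) := by
            rw [hcdef]
            field_simp [hwa.ne]
            ring
          have : c*(w + 3/4)/(w - a) < 0 :=
            div_neg_of_pos_of_neg (by nlinarith) hwa
          exact Set.mem_Iic.2 (by linarith [key, this])
        · have hwa : w - a < 0 := by linarith
          have hxlt : a + c^2/(w - a) < -(3/4) := by
            have key : a + c^2/(w - a) + 3/4 = c*(w + 3/4)/(w - a) := by
              rw [hcdef]
              field_simp [hwa.ne]
              ring
            have : c*(w + 3/4)/(w - a) < 0 :=
              div_neg_of_pos_of_neg (by nlinarith) hwa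
            linarith
          rw [hFlt _ hxlt]
          have h1 : a + c^2/(w - a) - a = c^2/(w - a) := by ring
          rw [h1, div_div_eq_mul_div, mul_comm, mul_div_assoc,
            div_self (pow_ne_zero 2 hc.ne'), mul_one]
          ring
  -- part 2
  have hanti2 : StrictAntiOn (FaReal a) (Set.Ico (-(3/4)) 0) := by
    rintro x hx y hy hxy
    rw [hFeq x hx.1, hFeq y hy.1]
    exact card_anti hx hy hxy
  have himg2 : FaReal a '' Set.Ico (-(3/4)) 0 = Set.Iic (-(3/4)) := by
    ext w
    constructor
    · rintro ⟨x, hx, rfl⟩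
      rw [hFeq x hx.1]
      exact card_mem2 hx.1 hx.2
    · intro hw
      obtain ⟨x, hx, hfx⟩ := card_surj2 hw
      exact ⟨x, ⟨hx.1, hx.2⟩, by rw [hFeq x hx.1]; exact hfx⟩
  -- part 3
  have hmono3 : StrictMonoOn (FaReal a) (Set.Ioc 0 (1/4)) := by
    rintro x hx y hy hxy
    rw [hFeq x (by linarith [hx.1]), hFeq y (by linarith [hy.1])]
    exact card_mono hx hy hxy
  have himg3 : FaReal a '' Set.Ioc 0 (1/4) = Set.Iic (1/4) := by
    ext w
    constructor
    · rintro ⟨x, hx, rfl⟩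
      rw [hFeq x (by linarith [hx.1])]
      exact card_mem3 hx.1 hx.2
    · intro hw
      obtain ⟨x, hx, hfx⟩ := card_surj3 hw
      exact ⟨x, ⟨hx.1, hx.2⟩, by rw [hFeq x (by linarith [hx.1])]; exact hfx⟩
  refine ⟨hanti1, himg1, hanti2, himg2, hmono3, himg3, ?_⟩
  intro x hx hne
  rcases lt_or_ge x (-(3/4)) with hcase | hcase
  · linarith [hcirc_lt x hcase]
  · rcases lt_or_ge x 0 with hcase2 | hcase2
    · rw [hFeq x hcase]
      linarith [card_mem2 hcase hcase2]
    · have hx0 : 0 < x := lt_of_le_of_ne hcase2 (Ne.symm hne)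
      rw [hFeq x (by linarith)]
      exact card_mem3 hx0 hx
end

section
/- For real a ≥ −1/12, the circle centered at a passing through −3/4 (radius a + 3/4) contains the main cardioid ♥ = {e^{iθ}/2 − e^{2iθ}/4 : θ ∈ [0, 2π)}'s interior: every point of the cardioid curve satisfies |φ(e^{iθ}) − a| ≤ a + 3/4, with equality only at θ = π (the point −3/4). -/
/-- For real `a ≥ −1/12`, the circle centered at `a` of radius `a + 3/4`
circumscribes the main cardioid `{e^{iθ}/2 − e^{2iθ}/4}`: every point of the
cardioid curve satisfies `|φ(e^{iθ}) − a| ≤ a + 3/4`, with equality iff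
`e^{iθ} = −1` (the point `−3/4`). -/
theorem cardioid_circumcircle (a : ℝ) (ha : -(1 / 12) ≤ a) (θ : ℝ) :
    ‖Complex.exp (θ * Complex.I) / 2 - Complex.exp (θ * Complex.I) ^ 2 / 4 - (a : ℂ)‖ ≤
        a + 3 / 4 ∧
      (‖Complex.exp (θ * Complex.I) / 2 - Complex.exp (θ * Complex.I) ^ 2 / 4 - (a : ℂ)‖ =
          a + 3 / 4 ↔ Complex.exp (θ * Complex.I) = -1) := by
  set c : ℝ := Real.cos θ with hc
  set s : ℝ := Real.sin θ with hs
  have hexp : Complex.exp (θ * Complex.I) = (c : ℂ) + (s : ℂ) * Complex.I := by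
    rw [Complex.exp_mul_I, Complex.ofReal_cos, Complex.ofReal_sin]
  have hcs : c ^ 2 + s ^ 2 = 1 := by
    have := Real.sin_sq_add_cos_sq θ; nlinarith
  have hc1 : -1 ≤ c := Real.neg_one_le_cos θ
  have hc2 : c ≤ 1 := Real.cos_le_one θ
  have key : ‖Complex.exp (θ * Complex.I) / 2 - Complex.exp (θ * Complex.I) ^ 2 / 4 - (a : ℂ)‖ ^ 2
      = (a + 3 / 4) ^ 2 - (1 + c) * (2 * a + 1 / 4 - a * c) := by
    rw [hexp, Complex.sq_norm, Complex.normSq_apply]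
    simp [Complex.add_re, Complex.add_im, Complex.mul_re, Complex.mul_im, Complex.div_re,
      Complex.div_im, Complex.normSq_apply, pow_two]
    ring_nf
    nlinarith [hcs]
  have hr : (0:ℝ) ≤ a + 3 / 4 := by linarith
  have hfac : 0 ≤ (1 + c) * (2 * a + 1 / 4 - a * c) := by
    nlinarith [mul_nonneg (by linarith : (0:ℝ) ≤ a + 1/12) (by linarith : (0:ℝ) ≤ 2 - c)]
  have hnn := norm_nonneg (Complex.exp (θ * Complex.I) / 2 - Complex.exp (θ * Complex.I) ^ 2 / 4 - (a : ℂ))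
  have hle : ‖Complex.exp (θ * Complex.I) / 2 - Complex.exp (θ * Complex.I) ^ 2 / 4 - (a : ℂ)‖ ≤ a + 3 / 4 := by
    nlinarith [key, hfac, hnn, hr]
  refine ⟨hle, ?_, ?_⟩
  · intro heq
    have hz : (1 + c) * (2 * a + 1 / 4 - a * c) = 0 := by
      rw [heq] at key; nlinarith [key]
    have hcneg : c = -1 := by
      by_contra h
      have hcgt : -1 < c := lt_of_le_of_ne hc1 (Ne.symm h)
      have hpos : 0 < 2 * a + 1 / 4 - a * c := by
        nlinarith [mul_nonneg (by linarith : (0:ℝ) ≤ a + 1/12) (by linarith : (0:ℝ) ≤ 2 - c)]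
      nlinarith [hz]
    have hs0 : s = 0 := by nlinarith [hcs, sq_nonneg s]
    rw [hexp, hcneg, hs0]
    simp
  · intro h
    rw [h]
    have : ((-1 : ℂ)) / 2 - (-1 : ℂ) ^ 2 / 4 - (a : ℂ) = ((-(a + 3/4) : ℝ) : ℂ) := by
      push_cast; ring
    rw [this, Complex.norm_real]
    rw [Real.norm_eq_abs, abs_of_nonpos (by linarith)]
    ring
end
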